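/- Let r ∈ (1,2] and C > 0, and suppose the generator L satisfies the r-logSob inequality with constant C. Let p ≥ q be real numbers such that either r' ≤ q ≤ p (where r' = r/(r−1)) or 1 < q ≤ p ≤ r. Then for every t ≥ (C/4)·log((p−1)/(q−1)) and every f : Ω → ℝ, one has ‖T_t f‖_p ≤ ‖f‖_q. -/

import Mathlib

/-!
Gross's argument. For positive `g` put `P s = 1 + (q - 1) e^{4s/C}` and
`F s = log ‖T_s g‖_{P s}`. Differentiating `E[(T_s g)^{P s}]` gives
`F' = (P' Ent((T_s g)^P) - P² 𝓔((T_s g)^{P-1}, T_s g)) / (P² E[(T_s g)^P])`, and since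
`C P' = 4 (P - 1)` the `P s`-logSob inequality makes this `≤ 0`. The exponent reaches `p` at
time `(C/4) log ((p-1)/(q-1))`; for the remaining time `P ≡ q` works the same way.

This needs logSob at every exponent of `[q, p]`. From `r` it descends to any `s ∈ (1, r]`
(for `r ≤ 2`) through `𝓔(f^a, f^b)/(ab) ≤ 𝓔(f^a', f^b')/(a'b')` whenever
`b' ≤ a ≤ a'` and `a + b = a' + b'`: writing `𝓔` as a sum over pairs with nonnegative
weights, this is the pointwise inequality for `(u^a - v^a)(u^b - v^b)/(ab)`, which follows from
the log-convexity of `y ↦ (e^y - 1)/y`. The substitution `f ↦ f^{s-1}` turns the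
`s/(s-1)`-inequality into the `s`-inequality. Finally `T_t` preserves positivity, since the
off-diagonal entries of `L` are `≤ 0`, so `|T_t f| ≤ T_t (|f| + ε)` and `ε → 0`.
-/

open Real Finset

noncomputable section

variable {Ω : Type*}

/-- Expectation `E f = ∑ ω, μ ω * f ω`. -/
def pexp [Fintype Ω] (μ : Ω → ℝ) (f : Ω → ℝ) : ℝ := ∑ ω, μ ω * f ω

/-- Dirichlet form `𝓔(f,g) = E[f · L g]`. -/
def dform [Fintype Ω] (μ : Ω → ℝ) (L : (Ω → ℝ) →ₗ[ℝ] (Ω → ℝ)) (f g : Ω → ℝ) : ℝ :=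
  pexp μ fun ω => f ω * L g ω

/-- Entropy `Ent(f) = E[f log f] − (E f) log (E f)`. -/
def entE [Fintype Ω] (μ : Ω → ℝ) (f : Ω → ℝ) : ℝ :=
  pexp μ (fun ω => f ω * Real.log (f ω)) - pexp μ f * Real.log (pexp μ f)

/-- Variance `Var(f) = E[f²] − (E f)²`. -/
def varE [Fintype Ω] (μ : Ω → ℝ) (f : Ω → ℝ) : ℝ :=
  pexp μ (fun ω => f ω ^ 2) - (pexp μ f) ^ 2

/-- The structural conditions on the Markov generator `L`: `L 1 = 0`, self-adjointness,
positive semidefiniteness, and nonnegativity of `L f` at a global maximum point of `f`. -/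
def IsGen [Fintype Ω] (μ : Ω → ℝ) (L : (Ω → ℝ) →ₗ[ℝ] (Ω → ℝ)) : Prop :=
  L (fun _ => 1) = 0 ∧
  (∀ f g, pexp μ (fun ω => f ω * L g ω) = pexp μ (fun ω => g ω * L f ω)) ∧
  (∀ f, 0 ≤ pexp μ (fun ω => f ω * L f ω)) ∧
  (∀ (f : Ω → ℝ) (ω : Ω), (∀ x, f x ≤ f ω) → 0 ≤ L f ω)

/-- The `p`-logSob inequality with constant `C` (with the conventions for `p = 0` and `p = 1`). -/
def LogSob [Fintype Ω] (μ : Ω → ℝ) (L : (Ω → ℝ) →ₗ[ℝ] (Ω → ℝ)) (p C : ℝ) : Prop :=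
  if p = 0 then
    ∀ f : Ω → ℝ, (∀ ω, 0 < f ω) →
      varE μ (fun ω => Real.log (f ω)) ≤ -(C / 2) * dform μ L f (fun ω => (f ω)⁻¹)
  else if p = 1 then
    ∀ f : Ω → ℝ, (∀ ω, 0 < f ω) →
      entE μ f ≤ C / 4 * dform μ L f (fun ω => Real.log (f ω))
  else
    ∀ f : Ω → ℝ, (∀ ω, 0 < f ω) →
      entE μ (fun ω => f ω ^ p) ≤
        C * p ^ 2 / (4 * (p - 1)) * dform μ L (fun ω => f ω ^ (p - 1)) f

/-- Markov semigroup `T t = e^{-tL}`. -/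
def heat [Fintype Ω] (L : (Ω → ℝ) →ₗ[ℝ] (Ω → ℝ)) (t : ℝ) (f : Ω → ℝ) : Ω → ℝ :=
  NormedSpace.exp ((-t) • (LinearMap.toContinuousLinearMap L)) f

/-- `‖f‖_p` for positive `f` and arbitrary real `p`, with `‖f‖_0 = exp (E log f)`. -/
def pnorm [Fintype Ω] (μ : Ω → ℝ) (p : ℝ) (f : Ω → ℝ) : ℝ :=
  if p = 0 then Real.exp (pexp μ fun ω => Real.log (f ω))
  else (pexp μ fun ω => f ω ^ p) ^ (1 / p)

/-- `‖f‖_p = (E |f|^p)^{1/p}` for real-valued `f`. -/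
def pnormAbs [Fintype Ω] (μ : Ω → ℝ) (p : ℝ) (f : Ω → ℝ) : ℝ :=
  (pexp μ fun ω => |f ω| ^ p) ^ (1 / p)

/-- Hölder conjugate `p' = p/(p-1)`, with the convention `0' = 0`. -/
def hconj (p : ℝ) : ℝ := if p = 0 then 0 else p / (p - 1)

/-- The simple generator `L = Id − E`. -/
def simpleL [Fintype Ω] (μ : Ω → ℝ) : (Ω → ℝ) →ₗ[ℝ] (Ω → ℝ) where
  toFun f := fun ω => f ω - pexp μ f
  map_add' f g := by
    funext ω
    simp only [Pi.add_apply, pexp, mul_add, Finset.sum_add_distrib]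
    ring
  map_smul' c f := by
    funext ω
    simp only [Pi.smul_apply, smul_eq_mul, pexp, RingHom.id_apply]
    rw [mul_sub, Finset.mul_sum]
    congr 1
    exact Finset.sum_congr rfl fun x _ => by ring


open LinearMap (toMatrix')

theorem ConvexOn.map_add_map_le {s : Set ℝ} {f : ℝ → ℝ} (hf : ConvexOn ℝ s f) {a b x y : ℝ}
    (hx : x ∈ s) (hy : y ∈ s) (ha : a ∈ Set.Icc x y) (hab : a + b = x + y) :
    f a + f b ≤ f x + f y := by
  rcases ha.1.eq_or_lt with rfl | hxa
  · rw [show b = y by linarith, add_comm]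
  have hxy : 0 < y - x := by linarith [ha.2]
  set θ := (a - x) / (y - x)
  have hθ : θ * (y - x) = a - x := div_mul_cancel₀ _ hxy.ne'
  have hθ0 : 0 ≤ θ := div_nonneg (by linarith) hxy.le
  have hθ1 : θ ≤ 1 := (div_le_one hxy).2 (by linarith [ha.2])
  have h₁ := hf.2 hx hy (sub_nonneg.2 hθ1) hθ0 (sub_add_cancel 1 θ)
  have h₂ := hf.2 hx hy hθ0 (sub_nonneg.2 hθ1) (add_sub_cancel θ 1)
  simp only [smul_eq_mul] at h₁ h₂
  rw [show (1 - θ) * x + θ * y = a by linarith] at h₁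
  rw [show θ * x + (1 - θ) * y = b by linarith] at h₂
  linarith

theorem sq_mul_exp_le_exp_sub_one_sq {y : ℝ} (hy : 0 ≤ y) :
    y ^ 2 * exp y ≤ (exp y - 1) ^ 2 := by
  have hsinh : y / 2 ≤ sinh (y / 2) := self_le_sinh_iff.2 (by linarith)
  have hfactor : exp y - 1 = exp (y / 2) * (2 * sinh (y / 2)) := by
    have h₁ : exp y = exp (y / 2) * exp (y / 2) := by rw [← exp_add, add_halves]
    have h₂ : exp (y / 2) * exp (-(y / 2)) = 1 := by rw [← exp_add]; simp
    rw [sinh_eq]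
    linear_combination h₁ + h₂
  have hlin : y * exp (y / 2) ≤ exp y - 1 := by
    rw [hfactor]; nlinarith [exp_pos (y / 2)]
  calc y ^ 2 * exp y
    _ = (y * exp (y / 2)) ^ 2 := by rw [mul_pow, sq (exp _), ← exp_add, add_halves]
    _ ≤ (exp y - 1) ^ 2 := pow_le_pow_left₀ (by positivity) hlin 2

theorem convexOn_log_exp_sub_one_sub_log :
    ConvexOn ℝ (Set.Ioi 0) fun y => log (exp y - 1) - log y := by
  have hE {y : ℝ} (hy : y ∈ Set.Ioi 0) : 0 < exp y - 1 := by
    linarith [add_one_lt_exp (ne_of_gt hy), hy.out]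
  have hd {y : ℝ} (hy : y ∈ Set.Ioi 0) : HasDerivAt (fun y => log (exp y - 1) - log y)
      (exp y / (exp y - 1) - y⁻¹) y :=
    (((hasDerivAt_exp y).sub_const 1).log (hE hy).ne').sub (hasDerivAt_log (ne_of_gt hy))
  have hd2 {y : ℝ} (hy : y ∈ Set.Ioi 0) : HasDerivAt (fun y => exp y / (exp y - 1) - y⁻¹)
      (-exp y / (exp y - 1) ^ 2 + (y ^ 2)⁻¹) y := by
    refine (((hasDerivAt_exp y).fun_div ((hasDerivAt_exp y).sub_const 1) (hE hy).ne').fun_sub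
      (hasDerivAt_inv (ne_of_gt hy))).congr_deriv ?_
    ring
  refine convexOn_of_hasDerivWithinAt2_nonneg (convex_Ioi 0)
    (fun y hy => (hd hy).continuousAt.continuousWithinAt)
    (fun y hy => (hd (interior_subset hy)).hasDerivWithinAt)
    (fun y hy => (hd2 (interior_subset hy)).hasDerivWithinAt) fun y hy => ?_
  have hy : 0 < y := interior_subset hy
  rw [neg_div, neg_add_eq_sub, sub_nonneg, div_le_iff₀ (pow_pos (hE hy) 2), inv_mul_eq_div,
    le_div_iff₀ (by positivity)]
  linarith [sq_mul_exp_le_exp_sub_one_sq hy.le]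

theorem rpow_sub_rpow_mul_div_le {u v a b a' b' : ℝ} (hu : 0 < u) (hv : 0 < v) (hb' : 0 < b')
    (ha : a ∈ Set.Icc b' a') (hab : a + b = a' + b') :
    (u ^ a - v ^ a) * (u ^ b - v ^ b) / (a * b) ≤
      (u ^ a' - v ^ a') * (u ^ b' - v ^ b') / (a' * b') := by
  wlog hvu : v < u generalizing u v
  · rcases (not_lt.1 hvu).eq_or_lt with rfl | huv
    · simp
    · convert this hv hu huv using 1 <;> ring
  set φ : ℝ → ℝ := fun y => log (exp y - 1) - log y
  set ℓ := log (u / v)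
  have hℓ : 0 < ℓ := log_pos ((one_lt_div hv).2 hvu)
  have hG {c : ℝ} (hc : 0 < c) : (u ^ c - v ^ c) / c = v ^ c * ℓ * exp (φ (c * ℓ)) := by
    have hcℓ : 0 < c * ℓ := mul_pos hc hℓ
    have hexp : exp (c * ℓ) = u ^ c / v ^ c := by
      rw [← div_rpow hu.le hv.le, rpow_def_of_pos (div_pos hu hv), mul_comm]
    have hE : 0 < exp (c * ℓ) - 1 := by linarith [add_one_lt_exp hcℓ.ne']
    have hvc : 0 < v ^ c := rpow_pos_of_pos hv c
    simp only [φ]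
    rw [exp_sub, exp_log hE, exp_log hcℓ, hexp]
    field_simp
  have hb : 0 < b := by linarith [ha.2]
  have hφ : φ (a * ℓ) + φ (b * ℓ) ≤ φ (b' * ℓ) + φ (a' * ℓ) :=
    convexOn_log_exp_sub_one_sub_log.map_add_map_le (mul_pos hb' hℓ)
      (mul_pos (hb'.trans_le (ha.1.trans ha.2)) hℓ)
      ⟨by nlinarith [ha.1], by nlinarith [ha.2]⟩ (by linear_combination ℓ * hab)
  calc (u ^ a - v ^ a) * (u ^ b - v ^ b) / (a * b)
    _ = (u ^ a - v ^ a) / a * ((u ^ b - v ^ b) / b) := by rw [div_mul_div_comm]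
    _ = v ^ (a + b) * ℓ ^ 2 * exp (φ (a * ℓ) + φ (b * ℓ)) := by
      rw [hG (hb'.trans_le ha.1), hG hb, rpow_add hv, exp_add]; ring
    _ ≤ v ^ (a' + b') * ℓ ^ 2 * exp (φ (b' * ℓ) + φ (a' * ℓ)) := by rw [hab]; gcongr
    _ = (u ^ a' - v ^ a') * (u ^ b' - v ^ b') / (a' * b') := by
      rw [← div_mul_div_comm, hG (hb'.trans_le (ha.1.trans ha.2)), hG hb', rpow_add hv,
        exp_add]
      ring

section BanachExp

open NormedSpace

-- `exp_add_of_commute` needs a `NormedAlgebra ℚ 𝔸` instance, which `E →L[ℝ] E` lacks.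
theorem exp_add_of_commute_real {𝔸 : Type*} [NormedRing 𝔸] [NormedAlgebra ℝ 𝔸] [CompleteSpace 𝔸]
    {x y : 𝔸} (hxy : Commute x y) : exp (x + y) = exp x * exp y :=
  exp_add_of_commute_of_mem_ball (𝕂 := ℝ) hxy (by simp [expSeries_radius_eq_top])
    (by simp [expSeries_radius_eq_top])

variable {E : Type*} [NormedAddCommGroup E] [NormedSpace ℝ E] [CompleteSpace E]

theorem exp_apply_of_apply_eq_zero {B : E →L[ℝ] E} {v : E} (hv : B v = 0) : exp B v = v := by
  refine ((exp_series_hasSum_exp' (𝕂 := ℝ) B).mapL (ContinuousLinearMap.apply ℝ E v)).unique ?_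
  have hterm : ∀ n ≠ 0, ((n.factorial : ℝ)⁻¹ • B ^ n) v = 0 := by
    rintro (_ | m) hn
    · exact absurd rfl hn
    · simp [pow_succ, hv]
  simpa using hasSum_single 0 hterm

theorem exp_apply_nonneg [PartialOrder E] [IsOrderedAddMonoid E] [OrderClosedTopology E]
    [PosSMulMono ℝ E] {B : E →L[ℝ] E} (hB : ∀ v, 0 ≤ v → 0 ≤ B v) {v : E} (hv : 0 ≤ v) :
    0 ≤ exp B v := by
  have hpow (n : ℕ) : 0 ≤ (B ^ n) v := by
    induction n with
    | zero => simpa using hv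
    | succ n ih => rw [pow_succ']; exact hB _ ih
  exact ((exp_series_hasSum_exp' (𝕂 := ℝ) B).mapL (ContinuousLinearMap.apply ℝ E v)).nonneg
    fun n => smul_nonneg (by positivity) (hpow n)

end BanachExp

section DirichletForm

variable [Fintype Ω] {μ : Ω → ℝ} {L : (Ω → ℝ) →ₗ[ℝ] (Ω → ℝ)}

theorem IsGen.toMatrix'_nonpos_of_ne [DecidableEq Ω] (hL : IsGen μ L) {x y : Ω} (hxy : x ≠ y) :
    toMatrix' L x y ≤ 0 := by
  have h := hL.2.2.2 (-Pi.single y 1) x fun z => by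
    rw [Pi.neg_apply, Pi.neg_apply, Pi.single_eq_of_ne hxy, neg_zero, neg_nonpos, Pi.single_apply]
    split_ifs <;> norm_num
  simpa [LinearMap.toMatrix'_apply] using h

theorem IsGen.mul_toMatrix'_symm [DecidableEq Ω] (hL : IsGen μ L) (x y : Ω) :
    μ x * toMatrix' L x y = μ y * toMatrix' L y x := by
  simpa [pexp, LinearMap.toMatrix'_apply, Pi.single_apply] using
    hL.2.1 (Pi.single x 1) (Pi.single y 1)

theorem IsGen.sum_toMatrix'_eq_zero [DecidableEq Ω] (hL : IsGen μ L) (x : Ω) :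
    ∑ y, toMatrix' L x y = 0 := by
  simpa [Matrix.mulVec, dotProduct, hL.1] using
    congrFun (LinearMap.toMatrix'_mulVec L fun _ => 1) x

theorem apply_eq_sum_toMatrix' [DecidableEq Ω] (f : Ω → ℝ) (x : Ω) :
    L f x = ∑ y, toMatrix' L x y * f y := by
  rw [← LinearMap.toMatrix'_mulVec]; rfl

theorem IsGen.dform_eq_half_sum [DecidableEq Ω] (hL : IsGen μ L) (f g : Ω → ℝ) :
    dform μ L f g =
      -(1 / 2) * ∑ x, ∑ y, μ x * toMatrix' L x y * ((f x - f y) * (g x - g y)) := by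
  have swap (h : Ω → Ω → ℝ) :
      ∑ x, ∑ y, μ x * toMatrix' L x y * h x y = ∑ x, ∑ y, μ x * toMatrix' L x y * h y x := by
    rw [Finset.sum_comm]
    simp_rw [hL.mul_toMatrix'_symm]
  have row (φ : Ω → ℝ) : ∑ x, ∑ y, μ x * toMatrix' L x y * φ x = 0 := by
    simp only [← Finset.sum_mul, ← Finset.mul_sum, hL.sum_toMatrix'_eq_zero, mul_zero, zero_mul,
      Finset.sum_const_zero]
  have hD : dform μ L f g = ∑ x, ∑ y, μ x * toMatrix' L x y * (f x * g y) := by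
    simp only [dform, pexp, apply_eq_sum_toMatrix' g, Finset.mul_sum]
    exact Finset.sum_congr rfl fun x _ => Finset.sum_congr rfl fun y _ => by ring
  have expand : ∑ x, ∑ y, μ x * toMatrix' L x y * ((f x - f y) * (g x - g y)) =
      ∑ x, ∑ y, μ x * toMatrix' L x y * (f x * g x)
        + ∑ x, ∑ y, μ x * toMatrix' L x y * (f y * g y)
        - ∑ x, ∑ y, μ x * toMatrix' L x y * (f x * g y)
        - ∑ x, ∑ y, μ x * toMatrix' L x y * (f y * g x) := by
    simp only [← Finset.sum_add_distrib, ← Finset.sum_sub_distrib]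
    exact Finset.sum_congr rfl fun x _ => Finset.sum_congr rfl fun y _ => by ring
  rw [expand, swap fun x y => f y * g y, swap fun x y => f y * g x, row, hD]
  ring

theorem IsGen.dform_div_le_dform_div (hμ : ∀ ω, 0 ≤ μ ω) (hL : IsGen μ L)
    {f g f' g' : Ω → ℝ} {c c' : ℝ}
    (h : ∀ x y, (f x - f y) * (g x - g y) / c ≤ (f' x - f' y) * (g' x - g' y) / c') :
    dform μ L f g / c ≤ dform μ L f' g' / c' := by
  classical
  simp only [hL.dform_eq_half_sum, mul_div_assoc, Finset.sum_div]
  refine mul_le_mul_of_nonpos_left (Finset.sum_le_sum fun x _ => Finset.sum_le_sum fun y _ => ?_)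
    (by norm_num)
  rcases eq_or_ne x y with rfl | hxy
  · simp
  · have hw : μ x * toMatrix' L x y ≤ 0 :=
      mul_nonpos_of_nonneg_of_nonpos (hμ x) (hL.toMatrix'_nonpos_of_ne hxy)
    simpa only [mul_div_assoc] using mul_le_mul_of_nonpos_left (h x y) hw

theorem IsGen.dform_comm (hL : IsGen μ L) (f g : Ω → ℝ) : dform μ L f g = dform μ L g f :=
  hL.2.1 f g

theorem IsGen.dform_nonneg_of_forall (hμ : ∀ ω, 0 ≤ μ ω) (hL : IsGen μ L) {f g : Ω → ℝ}
    (h : ∀ x y, 0 ≤ (f x - f y) * (g x - g y)) : 0 ≤ dform μ L f g := by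
  simpa [dform, pexp] using
    hL.dform_div_le_dform_div hμ (f := 0) (g := 0) (c := 1) (c' := 1) (by simpa using h)

theorem IsGen.dform_rpow_div_le (hμ : ∀ ω, 0 ≤ μ ω) (hL : IsGen μ L) {f : Ω → ℝ}
    (hf : ∀ ω, 0 < f ω) {a b a' b' : ℝ} (hb' : 0 < b') (ha : a ∈ Set.Icc b' a')
    (hab : a + b = a' + b') :
    dform μ L (fun ω => f ω ^ a) (fun ω => f ω ^ b) / (a * b) ≤
      dform μ L (fun ω => f ω ^ a') (fun ω => f ω ^ b') / (a' * b') :=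
  hL.dform_div_le_dform_div hμ fun x y => rpow_sub_rpow_mul_div_le (hf x) (hf y) hb' ha hab

theorem IsGen.dform_rpow_nonneg (hμ : ∀ ω, 0 ≤ μ ω) (hL : IsGen μ L) {f : Ω → ℝ}
    (hf : 0 ≤ f) {a : ℝ} (ha : 0 ≤ a) : 0 ≤ dform μ L (fun ω => f ω ^ a) f := by
  refine hL.dform_nonneg_of_forall hμ fun x y => ?_
  rcases le_total (f x) (f y) with h | h
  · exact mul_nonneg_of_nonpos_of_nonpos (sub_nonpos.2 (rpow_le_rpow (hf x) h ha))
      (sub_nonpos.2 h)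
  · exact mul_nonneg (sub_nonneg.2 (rpow_le_rpow (hf y) h ha)) (sub_nonneg.2 h)

end DirichletForm

section LogSobolev

variable [Fintype Ω] {μ : Ω → ℝ} {L : (Ω → ℝ) →ₗ[ℝ] (Ω → ℝ)}

theorem logSob_iff {s C : ℝ} (hs0 : s ≠ 0) (hs1 : s ≠ 1) :
    LogSob μ L s C ↔ ∀ f : Ω → ℝ, (∀ ω, 0 < f ω) →
      entE μ (fun ω => f ω ^ s) ≤
        C * s ^ 2 / (4 * (s - 1)) * dform μ L (fun ω => f ω ^ (s - 1)) f := by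
  rw [LogSob, if_neg hs0, if_neg hs1]

theorem LogSob.of_le (hμ : ∀ ω, 0 ≤ μ ω) (hL : IsGen μ L) {r s C : ℝ} (hC : 0 ≤ C)
    (hLS : LogSob μ L r C) (hs : 1 < s) (hsr : s ≤ r) (hr : r ≤ 2) : LogSob μ L s C := by
  have hr1 : 1 < r := hs.trans_le hsr
  have hr0 : r ≠ 0 := by positivity
  have hr1' : r - 1 ≠ 0 := by linarith
  have hs1 : s - 1 ≠ 0 := by linarith
  rw [logSob_iff (by linarith) (by linarith)] at hLS ⊢
  intro f hf
  have h := hLS (fun ω => f ω ^ (s / r)) fun ω => rpow_pos_of_pos (hf ω) _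
  simp only [← rpow_mul (hf _).le, div_mul_cancel₀ s hr0] at h
  have hsr' : s / r ≤ 1 := (div_le_one (by linarith)).2 hsr
  have hs1r : s - 1 ≤ s / r := by
    rw [le_div_iff₀ (by linarith)]; nlinarith
  calc entE μ (fun ω => f ω ^ s)
    _ ≤ C * r ^ 2 / (4 * (r - 1)) *
        dform μ L (fun ω => f ω ^ (s / r * (r - 1))) fun ω => f ω ^ (s / r) := h
    _ = C * s ^ 2 / 4 * (dform μ L (fun ω => f ω ^ (s / r)) (fun ω => f ω ^ (s / r * (r - 1)))
          / (s / r * (s / r * (r - 1)))) := by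
      rw [hL.dform_comm]; field_simp
    _ ≤ C * s ^ 2 / 4 * (dform μ L (fun ω => f ω ^ (1 : ℝ)) (fun ω => f ω ^ (s - 1))
          / (1 * (s - 1))) :=
      mul_le_mul_of_nonneg_left (hL.dform_rpow_div_le hμ hf (by linarith) ⟨hs1r, hsr'⟩
        (by field_simp; ring)) (by positivity)
    _ = C * s ^ 2 / (4 * (s - 1)) * dform μ L (fun ω => f ω ^ (s - 1)) f := by
      simp only [rpow_one]; rw [hL.dform_comm]; field_simp

theorem LogSob.of_conj (hL : IsGen μ L) {s C : ℝ} (hs : 1 < s)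
    (hLS : LogSob μ L (s / (s - 1)) C) : LogSob μ L s C := by
  have hs1 : s - 1 ≠ 0 := by linarith
  have hs' : 1 < s / (s - 1) := (one_lt_div (by linarith)).2 (by linarith)
  rw [logSob_iff (by linarith) (by linarith)] at hLS ⊢
  intro f hf
  have h := hLS (fun ω => f ω ^ (s - 1)) fun ω => rpow_pos_of_pos (hf ω) _
  have e₁ : (s - 1) * (s / (s - 1)) = s := mul_div_cancel₀ s hs1
  have e₂ : (s - 1) * (s / (s - 1) - 1) = 1 := by field_simp; ring
  simp only [← rpow_mul (hf _).le, e₁, e₂, rpow_one] at h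
  rw [hL.dform_comm]
  convert h using 2
  field_simp
  ring

theorem logSob_of_mem_Icc (hμ : ∀ ω, 0 ≤ μ ω) (hL : IsGen μ L) {r C p q : ℝ} (hC : 0 ≤ C)
    (hr1 : 1 < r) (hr2 : r ≤ 2) (hLS : LogSob μ L r C)
    (hpq : r / (r - 1) ≤ q ∨ (1 < q ∧ p ≤ r)) {s : ℝ} (hs : s ∈ Set.Icc q p) :
    LogSob μ L s C := by
  rcases hpq with hq | ⟨hq, hp⟩
  · have hr' : 1 < r / (r - 1) := (one_lt_div (by linarith)).2 (by linarith)
    have hs1 : 1 < s := by linarith [hs.1]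
    refine .of_conj hL hs1
      (hLS.of_le hμ hL hC ((one_lt_div (by linarith)).2 (by linarith)) ?_ hr2)
    rw [div_le_iff₀ (by linarith)]
    rw [div_le_iff₀ (by linarith)] at hq
    nlinarith [hs.1]
  · exact hLS.of_le hμ hL hC (by linarith [hs.1]) (by linarith [hs.2]) hr2

end LogSobolev

section HeatSemigroup

variable [Fintype Ω] {μ : Ω → ℝ} {L : (Ω → ℝ) →ₗ[ℝ] (Ω → ℝ)}

theorem heat_zero (f : Ω → ℝ) : heat L 0 f = f := by
  simp [heat]

theorem heat_add (s t : ℝ) (f : Ω → ℝ) : heat L (s + t) f = heat L s (heat L t f) := by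
  simp only [heat, neg_add, add_smul]
  rw [exp_add_of_commute_real (((Commute.refl _).smul_left _).smul_right _)]
  rfl

theorem hasDerivAt_heat (f : Ω → ℝ) (ω : Ω) (t : ℝ) :
    HasDerivAt (fun s => heat L s f ω) (-L (heat L t f) ω) t := by
  have h := hasDerivAt_pi.1
    ((hasDerivAt_exp_smul_const' (-L.toContinuousLinearMap) t).clm_apply (hasDerivAt_const t f)) ω
  simp only [smul_neg, ← neg_smul, map_zero, add_zero] at h
  exact h

theorem IsGen.exists_apply_le_smul (hL : IsGen μ L) :
    ∃ c : ℝ, ∀ g : Ω → ℝ, 0 ≤ g → L g ≤ c • g := by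
  classical
  refine ⟨∑ x, |toMatrix' L x x|, fun g hg x => ?_⟩
  rw [apply_eq_sum_toMatrix', ← Finset.add_sum_erase _ _ (Finset.mem_univ x), Pi.smul_apply,
    smul_eq_mul]
  have hoff : ∑ y ∈ Finset.univ.erase x, toMatrix' L x y * g y ≤ 0 :=
    Finset.sum_nonpos fun y hy => mul_nonpos_of_nonpos_of_nonneg
      (hL.toMatrix'_nonpos_of_ne (Finset.ne_of_mem_erase hy).symm) (hg y)
  have hdiag : toMatrix' L x x ≤ ∑ x, |toMatrix' L x x| :=
    (le_abs_self _).trans (Finset.single_le_sum (f := fun x => |toMatrix' L x x|)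
      (fun _ _ => abs_nonneg _) (Finset.mem_univ x))
  nlinarith [mul_le_mul_of_nonneg_right hdiag (hg x)]

theorem IsGen.heat_nonneg (hL : IsGen μ L) {t : ℝ} (ht : 0 ≤ t) {f : Ω → ℝ} (hf : 0 ≤ f) :
    0 ≤ heat L t f := by
  -- `c - L` preserves positivity, and `e^{-tL} = e^{-tc} e^{t(c - L)}`.
  obtain ⟨c, hc⟩ := hL.exists_apply_le_smul
  set A := L.toContinuousLinearMap
  set B : (Ω → ℝ) →L[ℝ] (Ω → ℝ) := t • (c • 1 - A)
  have hB (g : Ω → ℝ) (hg : 0 ≤ g) : 0 ≤ B g :=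
    smul_nonneg ht (sub_nonneg.2 (hc g hg))
  have hsplit : (-t) • A = B + algebraMap ℝ _ (-(t * c)) := by
    rw [Algebra.algebraMap_eq_smul_one]; simp only [B]; module
  have hheat : heat L t f = Real.exp (-(t * c)) • NormedSpace.exp B f := by
    rw [heat, hsplit, exp_add_of_commute_real (Algebra.commute_algebraMap_right _ _),
      ← NormedSpace.algebraMap_exp_comm, ← Real.exp_eq_exp_ℝ, Algebra.algebraMap_eq_smul_one]
    simp
  rw [hheat]
  exact smul_nonneg (exp_pos _).le (exp_apply_nonneg hB hf)

theorem IsGen.monotone_heat (hL : IsGen μ L) {t : ℝ} (ht : 0 ≤ t) : Monotone (heat L t) :=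
  fun f g hfg => by
    have h := hL.heat_nonneg ht (sub_nonneg.2 hfg)
    rwa [heat, map_sub, sub_nonneg] at h

theorem heat_const (hL : L (fun _ => 1) = 0) (t c : ℝ) : heat L t (fun _ => c) = fun _ => c := by
  refine exp_apply_of_apply_eq_zero ?_
  have : (fun _ : Ω => c) = c • fun _ => 1 := by ext; simp
  simp [this, hL]

theorem IsGen.heat_pos (hL : IsGen μ L) {t : ℝ} (ht : 0 ≤ t) {g : Ω → ℝ} (hg : ∀ ω, 0 < g ω)
    (ω : Ω) : 0 < heat L t g ω := by
  have : Nonempty Ω := ⟨ω⟩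
  obtain ⟨x, hx⟩ := Finite.exists_min g
  have h := hL.monotone_heat ht (show (fun _ => g x) ≤ g from hx) ω
  rw [heat_const hL.1] at h
  exact (hg x).trans_le h

theorem IsGen.abs_heat_le (hL : IsGen μ L) {t : ℝ} (ht : 0 ≤ t) (f : Ω → ℝ) :
    |heat L t f| ≤ heat L t |f| := by
  have hneg : heat L t (-f) = -heat L t f := map_neg _ _
  refine abs_le'.2 ⟨hL.monotone_heat ht (le_abs_self f), ?_⟩
  rw [← hneg]
  exact hL.monotone_heat ht (neg_le_abs f)

end HeatSemigroup

section Gross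

variable [Fintype Ω] {μ : Ω → ℝ} {L : (Ω → ℝ) →ₗ[ℝ] (Ω → ℝ)}

theorem pexp_pos [Nonempty Ω] (hμ : ∀ ω, 0 < μ ω) {f : Ω → ℝ} (hf : ∀ ω, 0 < f ω) :
    0 < pexp μ f :=
  Finset.sum_pos (fun ω _ => mul_pos (hμ ω) (hf ω)) Finset.univ_nonempty

theorem pnorm_eq_exp {p : ℝ} (hp : p ≠ 0) {f : Ω → ℝ} (hf : 0 < pexp μ fun ω => f ω ^ p) :
    pnorm μ p f = exp (log (pexp μ fun ω => f ω ^ p) / p) := by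
  rw [pnorm, if_neg hp, rpow_def_of_pos hf, mul_one_div]

theorem hasDerivAt_pexp_heat_rpow {g : Ω → ℝ} {P : ℝ → ℝ} {P' s : ℝ} (hP : HasDerivAt P P' s)
    (hu : ∀ ω, 0 < heat L s g ω) :
    HasDerivAt (fun s => pexp μ fun ω => heat L s g ω ^ P s)
      (-P s * dform μ L (fun ω => heat L s g ω ^ (P s - 1)) (heat L s g)
        + P' * pexp μ fun ω => heat L s g ω ^ P s * log (heat L s g ω)) s := by
  have h := HasDerivAt.fun_sum (u := Finset.univ) fun ω _ =>
    ((hasDerivAt_heat g ω s).rpow hP (hu ω)).const_mul (μ ω)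
  refine h.congr_deriv ?_
  simp only [dform, pexp, Finset.mul_sum, ← Finset.sum_add_distrib]
  exact Finset.sum_congr rfl fun ω _ => by ring

theorem hasDerivAt_log_pexp_heat_rpow_div {g : Ω → ℝ} {P : ℝ → ℝ} {P' s : ℝ}
    (hP : HasDerivAt P P' s) (hP0 : P s ≠ 0) (hu : ∀ ω, 0 < heat L s g ω)
    (hN : 0 < pexp μ fun ω => heat L s g ω ^ P s) :
    HasDerivAt (fun s => log (pexp μ fun ω => heat L s g ω ^ P s) / P s)
      ((P' * entE μ (fun ω => heat L s g ω ^ P s)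
          - P s ^ 2 * dform μ L (fun ω => heat L s g ω ^ (P s - 1)) (heat L s g))
        / (P s ^ 2 * pexp μ fun ω => heat L s g ω ^ P s)) s := by
  have hent : entE μ (fun ω => heat L s g ω ^ P s) =
      P s * (pexp μ fun ω => heat L s g ω ^ P s * log (heat L s g ω))
        - (pexp μ fun ω => heat L s g ω ^ P s) * log (pexp μ fun ω => heat L s g ω ^ P s) := by
    simp only [entE, pexp, log_rpow (hu _), Finset.mul_sum]
    congr 1
    exact Finset.sum_congr rfl fun ω _ => by ring
  refine (((hasDerivAt_pexp_heat_rpow hP hu).log hN.ne').div hP hP0).congr_deriv ?_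
  rw [hent]
  field_simp
  ring

theorem IsGen.mul_entE_le_of_logSob (hμ : ∀ ω, 0 ≤ μ ω) (hL : IsGen μ L) {C P P' : ℝ}
    (hP : 1 < P) (hP'0 : 0 ≤ P') (hP'C : C * P' ≤ 4 * (P - 1)) (hLS : LogSob μ L P C)
    {u : Ω → ℝ} (hu : ∀ ω, 0 < u ω) :
    P' * entE μ (fun ω => u ω ^ P) ≤ P ^ 2 * dform μ L (fun ω => u ω ^ (P - 1)) u := by
  have hP1 : P - 1 ≠ 0 := by linarith
  have hE := hL.dform_rpow_nonneg hμ (fun ω => (hu ω).le) (a := P - 1) (by linarith)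
  have hent := (logSob_iff (by linarith) (by linarith)).1 hLS u hu
  calc P' * entE μ (fun ω => u ω ^ P)
    _ ≤ P' * (C * P ^ 2 / (4 * (P - 1)) * dform μ L (fun ω => u ω ^ (P - 1)) u) :=
      mul_le_mul_of_nonneg_left hent hP'0
    _ = C * P' * (P ^ 2 * dform μ L (fun ω => u ω ^ (P - 1)) u) / (4 * (P - 1)) := by ring
    _ ≤ 4 * (P - 1) * (P ^ 2 * dform μ L (fun ω => u ω ^ (P - 1)) u) / (4 * (P - 1)) :=
      div_le_div_of_nonneg_right (mul_le_mul_of_nonneg_right hP'C (by positivity))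
        (by linarith)
    _ = P ^ 2 * dform μ L (fun ω => u ω ^ (P - 1)) u := by field_simp

theorem IsGen.pnorm_heat_le_of_logSob [Nonempty Ω] (hμ : ∀ ω, 0 < μ ω) (hL : IsGen μ L)
    {C T : ℝ} (hT : 0 ≤ T) {P P' : ℝ → ℝ}
    (hP : ∀ s ∈ Set.Icc 0 T, HasDerivAt P (P' s) s) (hP1 : ∀ s ∈ Set.Icc 0 T, 1 < P s)
    (hP'0 : ∀ s ∈ Set.Icc 0 T, 0 ≤ P' s) (hP'C : ∀ s ∈ Set.Icc 0 T, C * P' s ≤ 4 * (P s - 1))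
    (hLS : ∀ s ∈ Set.Icc 0 T, LogSob μ L (P s) C) {g : Ω → ℝ} (hg : ∀ ω, 0 < g ω) :
    pnorm μ (P T) (heat L T g) ≤ pnorm μ (P 0) g := by
  have hu {s} (hs : s ∈ Set.Icc 0 T) := hL.heat_pos hs.1 hg
  have hN {s} (hs : s ∈ Set.Icc 0 T) : 0 < pexp μ fun ω => heat L s g ω ^ P s :=
    pexp_pos hμ fun ω => rpow_pos_of_pos (hu hs ω) _
  have hF {s} (hs : s ∈ Set.Icc 0 T) := hasDerivAt_log_pexp_heat_rpow_div (hP s hs)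
    (by linarith [hP1 s hs]) (hu hs) (hN hs)
  have h0 : (0 : ℝ) ∈ Set.Icc 0 T := ⟨le_rfl, hT⟩
  have hT' : T ∈ Set.Icc 0 T := ⟨hT, le_rfl⟩
  have hanti : AntitoneOn (fun s => log (pexp μ fun ω => heat L s g ω ^ P s) / P s)
      (Set.Icc 0 T) := by
    refine antitoneOn_of_hasDerivWithinAt_nonpos (convex_Icc 0 T)
      (fun s hs => (hF hs).continuousAt.continuousWithinAt)
      (fun s hs => (hF (interior_subset hs)).hasDerivWithinAt) fun s hs => ?_
    have hs' := interior_subset hs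
    exact div_nonpos_of_nonpos_of_nonneg (sub_nonpos.2 (hL.mul_entE_le_of_logSob
      (fun ω => (hμ ω).le) (hP1 s hs') (hP'0 s hs') (hP'C s hs') (hLS s hs') (hu hs')))
      (by positivity [hN hs'])
  have hN0 : 0 < pexp μ fun ω => g ω ^ P 0 := by simpa only [heat_zero] using hN h0
  rw [pnorm_eq_exp (by linarith [hP1 T hT']) (hN hT'), pnorm_eq_exp (by linarith [hP1 0 h0]) hN0]
  exact exp_le_exp.2 (by simpa only [heat_zero] using hanti h0 hT' hT)

end Gross

section Hypercontractivity

open Filter Topology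

variable [Fintype Ω] {μ : Ω → ℝ} {L : (Ω → ℝ) →ₗ[ℝ] (Ω → ℝ)}

theorem pnormAbs_eq_pnorm {p : ℝ} (hp : p ≠ 0) (f : Ω → ℝ) : pnormAbs μ p f = pnorm μ p |f| := by
  rw [pnorm, if_neg hp]; rfl

theorem pnorm_mono (hμ : ∀ ω, 0 ≤ μ ω) {p : ℝ} (hp : 0 < p) {f g : Ω → ℝ} (hf : 0 ≤ f)
    (hfg : f ≤ g) : pnorm μ p f ≤ pnorm μ p g := by
  rw [pnorm, pnorm, if_neg hp.ne', if_neg hp.ne']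
  refine rpow_le_rpow (Finset.sum_nonneg fun ω _ => mul_nonneg (hμ ω) (rpow_nonneg (hf ω) p))
    (Finset.sum_le_sum fun ω _ => mul_le_mul_of_nonneg_left (rpow_le_rpow (hf ω) (hfg ω) hp.le)
      (hμ ω)) (by positivity)

theorem tendsto_pnorm_abs_add {q : ℝ} (hq : 0 < q) (f : Ω → ℝ) :
    Tendsto (fun ε => pnorm μ q fun ω => |f ω| + ε) (𝓝 0) (𝓝 (pnormAbs μ q f)) := by
  have hcont : Continuous fun ε : ℝ => pexp μ fun ω => (|f ω| + ε) ^ q :=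
    continuous_finsetSum _ fun ω _ => continuous_const.mul
      ((continuous_rpow_const hq.le).comp (continuous_const.add continuous_id))
  simpa [pnorm, pnormAbs, hq.ne'] using
    (hcont.tendsto 0).rpow_const (Or.inr (by positivity : 0 ≤ 1 / q))

theorem IsGen.pnormAbs_heat_le_pnorm_heat (hμ : ∀ ω, 0 ≤ μ ω) (hL : IsGen μ L) {t p : ℝ}
    (ht : 0 ≤ t) (hp : 0 < p) {f g : Ω → ℝ} (hfg : |f| ≤ g) :
    pnormAbs μ p (heat L t f) ≤ pnorm μ p (heat L t g) := by
  rw [pnormAbs_eq_pnorm hp.ne']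
  exact pnorm_mono hμ hp (abs_nonneg _) ((hL.abs_heat_le ht f).trans (hL.monotone_heat ht hfg))

theorem div_four_mul_log_nonneg {C p q : ℝ} (hC : 0 ≤ C) (hq : 1 < q) (hqp : q ≤ p) :
    0 ≤ C / 4 * log ((p - 1) / (q - 1)) :=
  mul_nonneg (by positivity) (log_nonneg ((one_le_div (by linarith)).2 (by linarith)))

theorem IsGen.pnorm_heat_le [Nonempty Ω] (hμ : ∀ ω, 0 < μ ω) (hL : IsGen μ L) {C p q t : ℝ}
    (hC : 0 < C) (hq : 1 < q) (hqp : q ≤ p) (hLS : ∀ s ∈ Set.Icc q p, LogSob μ L s C)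
    (ht : C / 4 * log ((p - 1) / (q - 1)) ≤ t) {g : Ω → ℝ} (hg : ∀ ω, 0 < g ω) :
    pnorm μ p (heat L t g) ≤ pnorm μ q g := by
  set t₀ := C / 4 * log ((p - 1) / (q - 1))
  have ht₀ : 0 ≤ t₀ := div_four_mul_log_nonneg hC.le hq hqp
  set P : ℝ → ℝ := fun s => 1 + (q - 1) * exp (4 * s / C)
  have hPt₀ : P t₀ = p := by
    have : 4 * t₀ / C = log ((p - 1) / (q - 1)) := by simp only [t₀]; field_simp
    simp only [P, this]
    rw [exp_log (div_pos (by linarith) (by linarith)), mul_div_cancel₀ _ (by linarith)]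
    ring
  have hP (s : ℝ) : HasDerivAt P (4 / C * (P s - 1)) s :=
    ((((hasDerivAt_id s).const_mul 4).div_const C).exp.const_mul (q - 1) |>.const_add 1)
      |>.congr_deriv (by simp only [P, id]; ring)
  have hPmem (s : ℝ) (hs : s ∈ Set.Icc 0 t₀) : P s ∈ Set.Icc q p := by
    refine ⟨?_, hPt₀ ▸ ?_⟩
    · nlinarith [one_le_exp (div_nonneg (mul_nonneg zero_le_four hs.1) hC.le)]
    · simp only [P]; gcongr; exact hs.2
  have hP1 (s : ℝ) (hs : s ∈ Set.Icc 0 t₀) : 1 < P s := hq.trans_le (hPmem s hs).1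
  have hT : 0 ≤ t - t₀ := by linarith
  calc pnorm μ p (heat L t g)
    _ = pnorm μ (P t₀) (heat L t₀ (heat L (t - t₀) g)) := by rw [hPt₀, ← heat_add, add_sub_cancel]
    _ ≤ pnorm μ (P 0) (heat L (t - t₀) g) :=
      hL.pnorm_heat_le_of_logSob hμ ht₀ (fun s _ => hP s) hP1
        (fun s hs => mul_nonneg (div_nonneg zero_le_four hC.le) (by linarith [hP1 s hs]))
        (fun s _ => le_of_eq (by field_simp)) (fun s hs => hLS _ (hPmem s hs))
        (hL.heat_pos hT hg)
    _ = pnorm μ q (heat L (t - t₀) g) := by simp [P]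
    _ ≤ pnorm μ q g :=
      hL.pnorm_heat_le_of_logSob hμ hT (P := fun _ => q) (fun s _ => hasDerivAt_const s q)
        (fun _ _ => hq) (fun _ _ => le_rfl) (fun _ _ => by linarith)
        (fun _ _ => hLS q ⟨le_rfl, hqp⟩) hg

end Hypercontractivity

/-- hypercontractivity from the `r`-logSob inequality, `r ∈ (1,2]`. -/
theorem hypercontractivity [Fintype Ω] (μ : Ω → ℝ)
    (hμpos : ∀ ω, 0 < μ ω) (hμ1 : ∑ ω, μ ω = 1)
    (L : (Ω → ℝ) →ₗ[ℝ] (Ω → ℝ)) (hL : IsGen μ L)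
    (r C : ℝ) (hr1 : 1 < r) (hr2 : r ≤ 2) (hC : 0 < C) (hLS : LogSob μ L r C)
    (p q : ℝ) (hqp : q ≤ p)
    (hcase : r / (r - 1) ≤ q ∨ (1 < q ∧ p ≤ r))
    (t : ℝ) (ht : C / 4 * Real.log ((p - 1) / (q - 1)) ≤ t)
    (f : Ω → ℝ) :
    pnormAbs μ p (heat L t f) ≤ pnormAbs μ q f := by
  have : Nonempty Ω := by
    obtain ⟨ω, -, -⟩ := Finset.exists_ne_zero_of_sum_ne_zero (hμ1.trans_ne one_ne_zero)
    exact ⟨ω⟩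
  have hμ0 (ω : Ω) : 0 ≤ μ ω := (hμpos ω).le
  have hq : 1 < q :=
    hcase.elim (fun h => ((one_lt_div (by linarith)).2 (by linarith)).trans_le h) (·.1)
  have ht0 : 0 ≤ t := (div_four_mul_log_nonneg hC.le hq hqp).trans ht
  have hε (ε : ℝ) (hε0 : 0 < ε) :
      pnormAbs μ p (heat L t f) ≤ pnorm μ q fun ω => |f ω| + ε :=
    (hL.pnormAbs_heat_le_pnorm_heat hμ0 ht0 (by linarith) fun ω => by simp [hε0.le]).trans
      (hL.pnorm_heat_le hμpos hC hq hqp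
        (fun _ hs => logSob_of_mem_Icc hμ0 hL hC.le hr1 hr2 hLS hcase hs) ht
        fun ω => by positivity)
  exact ge_of_tendsto ((tendsto_pnorm_abs_add (by linarith) f).mono_left nhdsWithin_le_nhds)
    (eventually_nhdsWithin_of_forall (s := Set.Ioi 0) hε)

end
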